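/- arXiv:1312.6728 — 4 statements merged into one kernel-verified Lean document; each statement's English description precedes it below -/
import Mathlib

section
/- For the generalized Curie-Weiss-Potts model, lim_{z → z_β} ‖g^r(z) − g^r(z_β)‖₁ / ‖z − z_β‖₁ = β(r−1)/q^{r−1}, where z_β = (1/q,...,1/q) and the limit is taken over z ∈ P, z ≠ z_β. -/
/-!
Write `g = softmax ∘ Φ` with `Φ z = (β z_k^{r-1})_k`. At the uniform point `Φ` has derivative
`β(r-1)q^{2-r} • id`, and the Jacobian `diag p - p pᵀ` of softmax at a constant vector acts as
`1/q • id` on vectors with zero coordinate sum, which are the directions of the simplex. Hence on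
the simplex `g z - g z_β = c • (z - z_β) + o(z - z_β)` with `c = β(r-1)/q^{r-1} ≥ 0`, and the ratio
of the ℓ¹ norms of the two differences tends to `c`.
-/

open Filter Topology Asymptotics

theorem tendsto_norm_div_norm_of_isLittleO {α F : Type*} [NormedAddCommGroup F]
    [NormedSpace ℝ F] {l : Filter α} {u v : α → F} {c : ℝ}
    (huv : (fun x => u x - c • v x) =o[l] v) (hv : ∀ᶠ x in l, v x ≠ 0) :
    Tendsto (fun x => ‖u x‖ / ‖v x‖) l (𝓝 |c|) := by
  rw [tendsto_iff_norm_sub_tendsto_zero]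
  refine squeeze_zero' (Eventually.of_forall fun _ => norm_nonneg _) ?_
    huv.norm_norm.tendsto_div_nhds_zero
  filter_upwards [hv] with x hx
  have hx' : 0 < ‖v x‖ := norm_pos_iff.2 hx
  calc ‖‖u x‖ / ‖v x‖ - |c|‖ = |‖u x‖ - ‖c • v x‖| / ‖v x‖ := by
        rw [norm_smul, Real.norm_eq_abs, Real.norm_eq_abs, ← abs_of_pos hx', ← abs_div,
          abs_of_pos hx']
        congr 1
        field_simp
    _ ≤ ‖u x - c • v x‖ / ‖v x‖ := by gcongr; exact abs_norm_sub_norm_le _ _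

theorem tendsto_sum_abs_div_sum_abs_of_isLittleO {α ι : Type*} [Fintype ι] {l : Filter α}
    {u v : α → ι → ℝ} {c : ℝ} (huv : (fun x => u x - c • v x) =o[l] v)
    (hv : ∀ᶠ x in l, v x ≠ 0) :
    Tendsto (fun x => (∑ k, |u x k|) / ∑ k, |v x k|) l (𝓝 |c|) := by
  set e := (PiLp.continuousLinearEquiv 1 ℝ fun _ : ι => ℝ).symm
  have hL1 : (fun x => e (u x) - c • e (v x)) =o[l] fun x => e (v x) := by
    simpa only [map_sub, map_smul] using
      (e.isBigO_comp _ l).trans_isLittleO (huv.trans_isBigO (e.isBigO_comp_rev v l))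
  simpa [e, PiLp.norm_eq_of_L1] using
    tendsto_norm_div_norm_of_isLittleO hL1 (hv.mono fun x hx => e.map_ne_zero_iff.2 hx)

theorem HasFDerivAt.isLittleO_sub_smul_nhdsWithin {E : Type*} [NormedAddCommGroup E]
    [NormedSpace ℝ E] {f : E → E} {f' : E →L[ℝ] E} {x₀ : E} {s : Set E} {c : ℝ}
    (hf : HasFDerivAt f f' x₀) (hs : ∀ x ∈ s, f' (x - x₀) = c • (x - x₀)) :
    (fun x => f x - f x₀ - c • (x - x₀)) =o[𝓝[s] x₀] fun x => x - x₀ :=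
  (hf.isLittleO.mono nhdsWithin_le_nhds).congr'
    (eventually_nhdsWithin_of_forall fun x hx => by simp only [hs x hx]) EventuallyEq.rfl

theorem HasDerivAt.hasFDerivAt_pi_comp_const {ι : Type*} [Fintype ι] {φ : ℝ → ℝ} {φ' a : ℝ}
    (hφ : HasDerivAt φ φ' a) :
    HasFDerivAt (fun (z : ι → ℝ) k => φ (z k)) (φ' • ContinuousLinearMap.id ℝ (ι → ℝ))
      (fun _ => a) := by
  have hk (k : ι) : HasFDerivAt (fun z : ι → ℝ => z k)
      (ContinuousLinearMap.proj k : (ι → ℝ) →L[ℝ] ℝ) (fun _ => a) := hasFDerivAt_apply k _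
  refine (hasFDerivAt_pi.2 fun k => hφ.comp_hasFDerivAt (fun _ : ι => a) (hk k)).congr_fderiv ?_
  ext
  simp

section Softmax

variable {ι : Type*} [Fintype ι]

noncomputable def softmax (s : ι → ℝ) : ι → ℝ := fun k => Real.exp (s k) / ∑ j, Real.exp (s j)

noncomputable def softmaxDeriv (s : ι → ℝ) : (ι → ℝ) →L[ℝ] ι → ℝ :=
  ContinuousLinearMap.pi fun k => softmax s k •
    ((ContinuousLinearMap.proj k : (ι → ℝ) →L[ℝ] ℝ) - ∑ j, softmax s j • ContinuousLinearMap.proj j)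

@[simp]
theorem softmaxDeriv_apply (s t : ι → ℝ) (k : ι) :
    softmaxDeriv s t k = softmax s k * (t k - ∑ j, softmax s j * t j) := by
  simp [softmaxDeriv]

theorem hasFDerivAt_softmax [Nonempty ι] (s : ι → ℝ) :
    HasFDerivAt softmax (softmaxDeriv s) s := by
  set Z := ∑ j, Real.exp (s j)
  have hZ : Z ≠ 0 := (Finset.sum_pos (fun j _ => Real.exp_pos (s j)) Finset.univ_nonempty).ne'
  have hexp (k : ι) : HasFDerivAt (fun s : ι → ℝ => Real.exp (s k))
      (Real.exp (s k) • (ContinuousLinearMap.proj k : (ι → ℝ) →L[ℝ] ℝ)) s :=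
    (hasFDerivAt_apply k s).exp
  have hinv : HasFDerivAt (fun s : ι → ℝ => (∑ j, Real.exp (s j))⁻¹)
      (-(Z ^ 2)⁻¹ • ∑ j, Real.exp (s j) • (ContinuousLinearMap.proj j : (ι → ℝ) →L[ℝ] ℝ)) s :=
    (hasDerivAt_inv hZ).comp_hasFDerivAt s (HasFDerivAt.fun_sum fun j _ => hexp j)
  refine hasFDerivAt_pi'.2 fun k => ((hexp k).mul hinv).congr_fderiv ?_
  ext t
  simp only [ContinuousLinearMap.comp_apply, ContinuousLinearMap.proj_apply, softmaxDeriv_apply,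
    add_apply, smul_apply, sum_apply, smul_eq_mul, softmax, div_mul_eq_mul_div, ← Finset.sum_div]
  field_simp
  ring

theorem softmax_const (b : ℝ) :
    softmax (fun _ : ι => b) = fun _ => (Fintype.card ι : ℝ)⁻¹ := by
  ext k
  simp only [softmax, Finset.sum_const, Finset.card_univ, nsmul_eq_mul]
  exact div_mul_cancel_right₀ (Real.exp_ne_zero b) _

theorem softmaxDeriv_const_apply (b : ℝ) {t : ι → ℝ} (ht : ∑ k, t k = 0) :
    softmaxDeriv (fun _ => b) t = (Fintype.card ι : ℝ)⁻¹ • t := by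
  ext k
  simp [softmax_const, ← Finset.mul_sum, ht]

theorem isLittleO_softmax_comp_sub_smul_nhdsWithin [Nonempty ι] {φ : ℝ → ℝ} {φ' a : ℝ}
    (hφ : HasDerivAt φ φ' a) {s : Set (ι → ℝ)} (hs : ∀ z ∈ s, ∑ k, (z k - a) = 0) :
    (fun z => softmax (fun k => φ (z k)) - softmax (fun _ => φ a) -
        (φ' / Fintype.card ι) • (z - fun _ => a)) =o[𝓝[s] fun _ => a]
      fun z => z - fun _ => a := by
  have hΦ := hφ.hasFDerivAt_pi_comp_const (ι := ι)
  refine ((hasFDerivAt_softmax (fun _ : ι => φ a)).comp _ hΦ).isLittleO_sub_smul_nhdsWithin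
    fun z hz => ?_
  have hsum : ∑ k, (φ' • (z - fun _ => a) : ι → ℝ) k = 0 := by
    simp [← Finset.mul_sum, hs z hz]
  rw [ContinuousLinearMap.comp_apply, smul_apply, ContinuousLinearMap.id_apply,
    softmaxDeriv_const_apply _ hsum, smul_smul, inv_mul_eq_div]

end Softmax

/-- For the generalized Curie-Weiss-Potts model,
`‖g^r(z) − g^r(z_β)‖₁ / ‖z − z_β‖₁ → β(r−1)/q^{r−1}` as `z → z_β` within the
simplex, `z ≠ z_β`, where `z_β = (1/q,...,1/q)` (and `g^r(z_β) = z_β`). -/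
theorem gcwp_local_lipschitz_limit
    (q r : ℕ) (hq : 2 ≤ q) (hr : 2 ≤ r) (β : ℝ) (hβ : 0 < β) :
    let P : Set (Fin q → ℝ) := {ν | (∀ k, 0 ≤ ν k) ∧ ∑ k, ν k = 1}
    let g : (Fin q → ℝ) → (Fin q → ℝ) := fun z k =>
      Real.exp (β * z k ^ (r - 1)) / ∑ j, Real.exp (β * z j ^ (r - 1))
    let zβ : Fin q → ℝ := fun _ => 1 / q
    Tendsto
      (fun z : Fin q → ℝ => (∑ k, |g z k - g zβ k|) / (∑ k, |z k - zβ k|))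
      (nhdsWithin zβ (P \ {zβ}))
      (nhds (β * (r - 1) / q ^ (r - 1))) := by
  intro P g zβ
  have : NeZero q := ⟨by omega⟩
  have hq0 : (q : ℝ) ≠ 0 := by positivity
  set c : ℝ := β * (r - 1) / q ^ (r - 1)
  have hφ : HasDerivAt (fun x : ℝ => β * x ^ (r - 1)) (q * c) (1 / q) := by
    refine ((hasDerivAt_pow (r - 1) (1 / q : ℝ)).const_mul β).congr_deriv ?_
    obtain ⟨n, rfl⟩ : ∃ n, r = n + 2 := ⟨r - 2, by omega⟩
    simp only [c, one_div, inv_pow, show n + 2 - 1 - 1 = n by omega]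
    push_cast
    field_simp
    ring
  have hP : ∀ z ∈ P \ {zβ}, ∑ k, (z k - 1 / q) = 0 := fun z hz => by
    simp [Finset.sum_sub_distrib, hz.1.2, hq0]
  have ho := isLittleO_softmax_comp_sub_smul_nhdsWithin hφ hP
  rw [Fintype.card_fin, mul_div_cancel_left₀ c hq0] at ho
  have hlim := tendsto_sum_abs_div_sum_abs_of_isLittleO ho
    (eventually_nhdsWithin_of_forall fun z hz => sub_ne_zero.2 hz.2)
  have hr1 : (1 : ℝ) ≤ r := by exact_mod_cast (by omega : 1 ≤ r)
  rwa [abs_of_nonneg (div_nonneg (mul_nonneg hβ.le (sub_nonneg.2 hr1)) (by positivity))] at hlim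
end

section
/- Let β_s(q,r) = sup{ β ≥ 0 : g_k^r(z) < z_k for all z ∈ P with z_k ∈ (1/q, 1] } and let β_c(q,r) be the equilibrium critical value of the generalized Curie-Weiss-Potts model characterized by: for β > β_c there exists u > 0 with u < (1 − e^{Δ(u)})/(1 + (q−1)e^{Δ(u)}), Δ(u) = −(β/q^{r−1})[(1+(q−1)u)^{r−1} − (1−u)^{r−1}]. Then β_s(q,r) ≤ β_c(q,r). -/
/-- `β_s(q,r) ≤ β_c(q,r)`, where `β_s` is the supremum of `β ≥ 0`
such that `g_k^r(z) < z_k` for all simplex points `z` with `z_k ∈ (1/q, 1]`, and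
`β_c` is characterized by: for every `β > β_c` there exists `u > 0` with
`u < (1 − e^{Δ(u)})/(1 + (q−1)e^{Δ(u)})`,
`Δ(u) = −(β/q^{r−1})[(1+(q−1)u)^{r−1} − (1−u)^{r−1}]`. -/
theorem gcwp_beta_s_le_beta_c
    (q r : ℕ) (hq : 2 ≤ q) (hr : 2 ≤ r) (βc : ℝ) (hβc : 0 ≤ βc)
    (hc : ∀ β : ℝ, βc < β →
      ∃ u : ℝ, 0 < u ∧
        u < (1 - Real.exp (-(β / q ^ (r - 1)) *
              ((1 + (q - 1) * u) ^ (r - 1) - (1 - u) ^ (r - 1)))) /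
            (1 + (q - 1) * Real.exp (-(β / q ^ (r - 1)) *
              ((1 + (q - 1) * u) ^ (r - 1) - (1 - u) ^ (r - 1))))) :
    sSup {β : ℝ | 0 ≤ β ∧
        ∀ z : Fin q → ℝ, ((∀ k, 0 ≤ z k) ∧ ∑ k, z k = 1) →
          ∀ k : Fin q, z k ∈ Set.Ioc (1 / (q : ℝ)) 1 →
            Real.exp (β * z k ^ (r - 1)) / (∑ j, Real.exp (β * z j ^ (r - 1)))
              < z k}
      ≤ βc := by
  apply Real.sSup_le _ hβc
  rintro β ⟨hβ0, hβ⟩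
  by_contra hlt
  push_neg at hlt
  obtain ⟨u, hu, hu2⟩ := hc β hlt
  haveI : NeZero q := ⟨by omega⟩
  have hq1 : (1:ℝ) ≤ (q:ℝ) - 1 := by
    have : (2:ℝ) ≤ (q:ℝ) := by exact_mod_cast hq
    linarith
  have hqpos : (0:ℝ) < (q:ℝ) := by linarith
  set E : ℝ := Real.exp (-(β / (q:ℝ) ^ (r - 1)) *
      ((1 + ((q:ℝ) - 1) * u) ^ (r - 1) - (1 - u) ^ (r - 1))) with hE
  have hEpos : 0 < E := Real.exp_pos _
  have hden : (0:ℝ) < 1 + ((q:ℝ)-1) * E := by nlinarith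
  rw [lt_div_iff₀ hden] at hu2
  have hu1 : u < 1 := by nlinarith
  set a : ℝ := (1 + ((q:ℝ)-1)*u)/q with ha
  set b : ℝ := (1 - u)/q with hb
  have hapos : 1/(q:ℝ) < a := by
    rw [ha, div_lt_div_iff₀ hqpos hqpos]
    nlinarith [mul_pos (mul_pos hu (show (0:ℝ) < (q:ℝ)-1 by linarith)) hqpos]
  have hale : a ≤ 1 := by
    rw [ha, div_le_one hqpos]
    nlinarith [mul_le_mul_of_nonneg_left hu1.le (by linarith : (0:ℝ) ≤ (q:ℝ)-1)]
  have hbpos : 0 ≤ b := div_nonneg (by linarith) hqpos.le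
  set z : Fin q → ℝ := fun k => if k = 0 then a else b with hz
  have hnn : ∀ k, 0 ≤ z k := by
    intro k
    by_cases h : k = 0 <;> simp [hz, h, hbpos]
    linarith [lt_trans (by positivity : (0:ℝ) < 1/(q:ℝ)) hapos]
  have hzsplit : ∀ (f : ℝ → ℝ), ∑ k, f (z k) = f a + ((q:ℝ)-1) * f b := by
    intro f
    have h1 : ∀ k : Fin q, f (z k) = f b + (if k = 0 then f a - f b else 0) := by
      intro k; by_cases h : k = 0 <;> simp [hz, h]
    have h2 : ∑ k : Fin q, (if k = 0 then f a - f b else 0) = f a - f b := by simp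
    simp_rw [h1]
    rw [Finset.sum_add_distrib, h2, Finset.sum_const]
    simp only [Finset.card_univ, Fintype.card_fin, nsmul_eq_mul]
    ring
  have hsum1 : ∑ k, z k = 1 := by
    rw [hzsplit (fun x => x)]
    show a + ((q:ℝ)-1)*b = 1
    rw [ha, hb]
    field_simp
    ring
  have hg := hβ z ⟨hnn, hsum1⟩ 0 (by simp only [hz, if_pos rfl]; exact ⟨hapos, hale⟩)
  have hz0 : z 0 = a := by simp [hz]
  rw [hz0] at hg
  have hsumexp : ∑ j, Real.exp (β * z j ^ (r-1))
      = Real.exp (β * a^(r-1)) + ((q:ℝ)-1) * Real.exp (β * b^(r-1)) := by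
    exact hzsplit (fun x => Real.exp (β * x ^ (r-1)))
  rw [hsumexp] at hg
  set A : ℝ := Real.exp (β * a^(r-1)) with hA
  set B : ℝ := Real.exp (β * b^(r-1)) with hB
  have hApos : 0 < A := Real.exp_pos _
  have hBpos : 0 < B := Real.exp_pos _
  have hE2 : E * A = B := by
    rw [hE, hA, hB, ← Real.exp_add]
    congr 1
    have hqp : ((q:ℝ))^(r-1) ≠ 0 := pow_ne_zero _ (ne_of_gt hqpos)
    rw [ha, hb, div_pow, div_pow]
    field_simp
    ring
  have hdenAB : 0 < A + ((q:ℝ)-1) * B := by positivity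
  rw [div_lt_iff₀ hdenAB] at hg
  -- hg : A < a * (A + (q-1) B), i.e. q A < (1+(q-1)u)(A+(q-1)B)
  have hg' : (q:ℝ) * A < (1 + ((q:ℝ)-1)*u) * (A + ((q:ℝ)-1)*B) := by
    rw [ha, div_mul_eq_mul_div, lt_div_iff₀ hqpos] at hg
    linarith
  -- from hu2 : u * (1 + (q-1)E) < 1 - E, multiply by A, use E*A = B
  have hkey : u * A + u * ((q:ℝ)-1) * B + B < A := by
    have := mul_lt_mul_of_pos_right hu2 hApos
    nlinarith [hE2]
  nlinarith [hg', hkey, mul_lt_mul_of_pos_left hkey (by linarith : (0:ℝ) < (q:ℝ)-1)]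
end

section
/- Along the straight-line path z(t) = (1/q)(1−t) + zt with z ∈ P: (a) if z_k ≤ 1/q, then t ↦ g_k^r(z(t)) is monotonically decreasing on [0,1]; (b) if z_k > 1/q, then t ↦ g_k^r(z(t)) has at most one critical point in (0,1). -/
/-!
Write `a_j(t) = 1/q + t (z_j - 1/q)`, `F_j = exp (β a_j^(r-1))` and `X_j = (z_j - 1/q) a_j^(r-2)`.
Then `d/dt g_k = β (r-1) F_k / (Σ F)² · Φ_k` with `Φ_k = Σ_j F_j (X_k - X_j)`.

(a) If `z_k ≤ 1/q` then `X_k ≤ 0`, while `Σ_j F_j X_j = Σ_j (z_j - 1/q) h(a_j)` with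
`h(a) = exp (β a^(r-1)) a^(r-2)` increasing and `Σ_j (z_j - 1/q) = 0`, so that sum is `≥ 0`
(each term `(z_j - 1/q)(h(a_j) - h(1/q))` is). Hence `Φ_k ≤ 0`.

(b) If `z_k > 1/q`, then at every zero of `Φ_k` in `(0, 1)` its derivative is negative: the part
coming from the weights is minus a positive `F`-variance of the `X_j`, and the part coming from
the `X_j` is nonpositive because `b ↦ (b - 1/q) b^(r-3)` lies below a supporting combination
`A + μ (b - 1/q) b^(r-2)` touching at `a_k` (weighted AM-GM), and the zero of `Φ_k` says that
`(b - 1/q) b^(r-2)` has `F`-average equal to its value at `a_k`. A function that only crosses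
zero downwards has at most one zero.
-/

open Real Set Topology

theorem HasDerivAt.eventually_nhdsGT_neg {f : ℝ → ℝ} {f' x : ℝ} (hf : HasDerivAt f f' x)
    (hfx : f x = 0) (hf' : f' < 0) : ∀ᶠ y in 𝓝[>] x, f y < 0 := by
  have hslope := (hasDerivAt_iff_tendsto_slope.1 hf).mono_left (nhdsGT_le_nhdsNE x)
  filter_upwards [hslope.eventually_lt_const hf', self_mem_nhdsWithin] with y hy hxy
  rw [slope_def_field, hfx, sub_zero] at hy
  by_contra! h
  exact hy.not_ge (div_nonneg h (sub_pos.2 hxy).le)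

theorem HasDerivAt.eventually_nhdsLT_pos {f : ℝ → ℝ} {f' x : ℝ} (hf : HasDerivAt f f' x)
    (hfx : f x = 0) (hf' : f' < 0) : ∀ᶠ y in 𝓝[<] x, 0 < f y := by
  have hslope := (hasDerivAt_iff_tendsto_slope.1 hf).mono_left (nhdsLT_le_nhdsNE x)
  filter_upwards [hslope.eventually_lt_const hf', self_mem_nhdsWithin] with y hy hyx
  rw [slope_def_field, hfx, sub_zero] at hy
  by_contra! h
  exact hy.not_ge (div_nonneg_of_nonpos h (sub_neg.2 hyx).le)

/-- Zeros at which the derivative is negative are isolated downward crossings, so between two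
of them there would be an upward crossing. -/
theorem eq_of_eq_zero_of_hasDerivAt_neg {f : ℝ → ℝ} {s : Set ℝ} (hs : s.OrdConnected)
    (hf : ContinuousOn f s) (hneg : ∀ x ∈ s, f x = 0 → ∃ f', HasDerivAt f f' x ∧ f' < 0)
    {x y : ℝ} (hx : x ∈ s) (hy : y ∈ s) (hfx : f x = 0) (hfy : f y = 0) : x = y := by
  suffices key : ∀ u ∈ s, ∀ v ∈ s, f u = 0 → f v = 0 → ¬ u < v from
    le_antisymm (not_lt.1 (key y hy x hx hfy hfx)) (not_lt.1 (key x hx y hy hfx hfy))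
  intro u hu v hv hfu hfv huv
  obtain ⟨fu', hu', hfu'⟩ := hneg u hu hfu
  obtain ⟨a, hfa, hua, hav⟩ :=
    ((hu'.eventually_nhdsGT_neg hfu hfu').and (Ioo_mem_nhdsGT huv)).exists
  have hsub : Icc a v ⊆ s := (Icc_subset_Icc hua.le le_rfl).trans (hs.out hu hv)
  have hcont : ContinuousOn f (Icc a v) := hf.mono hsub
  set Z := Icc a v ∩ f ⁻¹' {0}
  have hZ : IsClosed Z := hcont.preimage_isClosed_of_isClosed isClosed_Icc isClosed_singleton
  have hvZ : v ∈ Z := ⟨⟨hav.le, le_rfl⟩, hfv⟩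
  have hbdd : BddBelow Z := ⟨a, fun w hw => hw.1.1⟩
  obtain ⟨⟨hab, hbv⟩, hfb⟩ := hZ.csInf_mem ⟨v, hvZ⟩ hbdd
  set b := sInf Z
  have hab' : a < b := hab.lt_of_ne fun h => hfa.ne (h ▸ hfb)
  obtain ⟨fb', hb', hfb'⟩ := hneg b (hsub ⟨hab, hbv⟩) hfb
  obtain ⟨w, hfw, haw, hwb⟩ :=
    ((hb'.eventually_nhdsLT_pos hfb hfb').and (Ioo_mem_nhdsLT hab')).exists
  obtain ⟨y, hy, hfy⟩ := intermediate_value_Icc haw.le (hcont.mono (Icc_subset_Icc le_rfl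
    (hwb.le.trans hbv))) ⟨hfa.le, hfw.le⟩
  exact (csInf_le hbdd ⟨⟨hy.1, hy.2.trans (hwb.le.trans hbv)⟩, hfy⟩).not_gt (hy.2.trans_lt hwb)

theorem mul_pow_mul_le_one {x y w : ℝ} (n : ℕ) (hy : 0 ≤ y) (hw : 0 ≤ w)
    (h : x + n * y + w = n + 2) : x * y ^ n * w ≤ 1 := by
  have hle : ∀ u : ℝ, u ≤ exp (u - 1) := fun u => by linarith [add_one_le_exp (u - 1)]
  calc x * y ^ n * w ≤ exp (x - 1) * exp (y - 1) ^ n * exp (w - 1) := by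
        gcongr <;> apply hle
    _ = 1 := by
        rw [← exp_nat_mul, ← exp_add, ← exp_add, exp_eq_one_iff]
        linarith

/-- `μ` is the multiplier for which `c + e` is a critical point of the left-hand side; the
inequality is then AM-GM for the factors `b - c`, `b` (`n` times) and `1 - μ b`, rescaled by
their values at `c + e`. -/
theorem exists_sub_mul_pow_mul_one_sub_le (n : ℕ) {c e : ℝ} (hc : 0 < c) (he : 0 < e) :
    ∃ μ : ℝ, ∀ b : ℝ, 0 ≤ b →
      (b - c) * b ^ n * (1 - μ * b) ≤ e * (c + e) ^ n * (1 - μ * (c + e)) := by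
  set D := c + e + (n + 1) * e
  refine ⟨(c + (n + 1) * e) / ((c + e) * D), fun b hb => ?_⟩
  set μ := (c + (n + 1) * e) / ((c + e) * D)
  have hD : 0 < D := by positivity
  have hstar : 1 - μ * (c + e) = e / D := by
    simp only [μ]; field_simp; ring
  have hrhs : 0 < e * (c + e) ^ n * (1 - μ * (c + e)) := by rw [hstar]; positivity
  have hpow := pow_nonneg hb n
  rcases lt_or_ge b c with hbc | hbc
  · have : μ * b ≤ μ * (c + e) := by gcongr; linarith
    have hμb : 0 ≤ 1 - μ * b := by linarith [div_pos he hD]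
    exact (mul_nonpos_of_nonpos_of_nonneg
      (mul_nonpos_of_nonpos_of_nonneg (by linarith) hpow) hμb).trans hrhs.le
  rcases lt_or_ge (1 - μ * b) 0 with hμb | hμb
  · exact (mul_nonpos_of_nonneg_of_nonpos
      (mul_nonneg (by linarith) hpow) hμb.le).trans hrhs.le
  have hmean := mul_pow_mul_le_one n (x := (b - c) / e) (y := b / (c + e))
    (w := (1 - μ * b) / (1 - μ * (c + e))) (by positivity)
    (by rw [hstar]; positivity) (by rw [hstar]; simp only [μ]; field_simp; ring)
  calc (b - c) * b ^ n * (1 - μ * b)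
      = (b - c) / e * (b / (c + e)) ^ n * ((1 - μ * b) / (1 - μ * (c + e)))
        * (e * (c + e) ^ n * (1 - μ * (c + e))) := by
        rw [div_pow, hstar]; field_simp
    _ ≤ e * (c + e) ^ n * (1 - μ * (c + e)) := mul_le_of_le_one_left hrhs.le hmean

/-- Averaging `exists_sub_mul_pow_mul_one_sub_le` against `w`, the `μ`-terms cancel by `h`. -/
theorem sum_mul_sq_mul_pow_ge {ι : Type*} (n : ℕ) {s : Finset ι} {w b : ι → ℝ}
    (hw : ∀ j ∈ s, 0 ≤ w j) (hb : ∀ j ∈ s, 0 ≤ b j) {c e : ℝ} (hc : 0 < c) (he : 0 < e)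
    (h : ∑ j ∈ s, w j * ((b j - c) * b j ^ (n + 1)) = (∑ j ∈ s, w j) * (e * (c + e) ^ (n + 1))) :
    (∑ j ∈ s, w j) * (e ^ 2 * (c + e) ^ n) ≤ ∑ j ∈ s, w j * ((b j - c) ^ 2 * b j ^ n) := by
  obtain ⟨μ, hμ⟩ := exists_sub_mul_pow_mul_one_sub_le n hc he
  set W := ∑ j ∈ s, w j
  set H := ∑ j ∈ s, w j * ((b j - c) * b j ^ n)
  have hH : H - μ * (W * (e * (c + e) ^ (n + 1))) ≤ W * (e * (c + e) ^ n * (1 - μ * (c + e))) := by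
    calc H - μ * (W * (e * (c + e) ^ (n + 1)))
        = ∑ j ∈ s, w j * ((b j - c) * b j ^ n * (1 - μ * b j)) := by
          rw [← h, Finset.mul_sum, ← Finset.sum_sub_distrib]
          exact Finset.sum_congr rfl fun j _ => by ring
      _ ≤ ∑ j ∈ s, w j * (e * (c + e) ^ n * (1 - μ * (c + e))) :=
          Finset.sum_le_sum fun j hj => mul_le_mul_of_nonneg_left (hμ _ (hb j hj)) (hw j hj)
      _ = W * (e * (c + e) ^ n * (1 - μ * (c + e))) := by rw [Finset.sum_mul]
  have hsq : ∑ j ∈ s, w j * ((b j - c) ^ 2 * b j ^ n) =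
      W * (e * (c + e) ^ (n + 1)) - c * H := by
    rw [← h, Finset.mul_sum, ← Finset.sum_sub_distrib]
    exact Finset.sum_congr rfl fun j _ => by ring
  have hHle : H ≤ W * (e * (c + e) ^ n) := by
    linear_combination hH + μ * (W * e) * pow_succ (c + e) n
  rw [hsq]
  linear_combination mul_le_mul_of_nonneg_left hHle hc.le + W * e * pow_succ (c + e) n

theorem sum_mul_nonneg_of_monotoneOn {ι : Type*} {s : Finset ι} {d : ι → ℝ}
    (hd : ∑ j ∈ s, d j = 0) {S : Set ℝ} {h : ℝ → ℝ} (hh : MonotoneOn h S) {c t : ℝ}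
    (ht : 0 ≤ t) (hc : c ∈ S) (hS : ∀ j ∈ s, c + t * d j ∈ S) :
    0 ≤ ∑ j ∈ s, d j * h (c + t * d j) := by
  have hcentre : ∑ j ∈ s, d j * h (c + t * d j) = ∑ j ∈ s, d j * (h (c + t * d j) - h c) := by
    simp only [mul_sub, Finset.sum_sub_distrib, ← Finset.sum_mul, hd, zero_mul, sub_zero]
  rw [hcentre]
  refine Finset.sum_nonneg fun j hj => ?_
  rcases le_total 0 (d j) with hdj | hdj
  · exact mul_nonneg hdj (sub_nonneg.2 (hh hc (hS j hj) (by nlinarith)))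
  · exact mul_nonneg_of_nonpos_of_nonpos hdj (sub_nonpos.2 (hh (hS j hj) hc (by nlinarith)))

section LinePath

variable {ι : Type*}

/-- With `m = r - 2` and `c = 1/q`, these are `a_j`, `F_j`, `X_j` and `Φ_k` of the header. -/
noncomputable def linePath (c : ℝ) (z : ι → ℝ) (t : ℝ) (j : ι) : ℝ := c * (1 - t) + z j * t

noncomputable def lineWeight (β c : ℝ) (m : ℕ) (z : ι → ℝ) (t : ℝ) (j : ι) : ℝ :=
  exp (β * linePath c z t j ^ (m + 1))

noncomputable def lineRate (c : ℝ) (m : ℕ) (z : ι → ℝ) (t : ℝ) (j : ι) : ℝ :=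
  (z j - c) * linePath c z t j ^ m

noncomputable def lineGap [Fintype ι] (β c : ℝ) (m : ℕ) (z : ι → ℝ) (k : ι) (t : ℝ) : ℝ :=
  ∑ j, lineWeight β c m z t j * (lineRate c m z t k - lineRate c m z t j)

variable {β c t : ℝ} {m : ℕ} {z : ι → ℝ}

theorem linePath_eq (j : ι) : linePath c z t j = c + t * (z j - c) := by
  unfold linePath; ring

theorem linePath_nonneg (hc : 0 ≤ c) (hz : ∀ j, 0 ≤ z j) (ht : t ∈ Icc 0 1) (j : ι) :
    0 ≤ linePath c z t j :=
  add_nonneg (mul_nonneg hc (sub_nonneg.2 ht.2)) (mul_nonneg (hz j) ht.1)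

theorem linePath_pos (hc : 0 < c) (hz : ∀ j, 0 ≤ z j) (ht : t ∈ Ioo 0 1) (j : ι) :
    0 < linePath c z t j :=
  add_pos_of_pos_of_nonneg (mul_pos hc (sub_pos.2 ht.2)) (mul_nonneg (hz j) ht.1.le)

theorem hasDerivAt_linePath (j : ι) : HasDerivAt (linePath c z · j) (z j - c) t := by
  simp_rw [linePath_eq]
  simpa using ((hasDerivAt_id t).mul_const (z j - c)).const_add c

theorem hasDerivAt_lineWeight (j : ι) :
    HasDerivAt (lineWeight β c m z · j)
      (lineWeight β c m z t j * (β * (m + 1) * lineRate c m z t j)) t := by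
  refine ((((hasDerivAt_linePath (c := c) (z := z) j).fun_pow (m + 1)).const_mul β).exp
    ).congr_deriv ?_
  simp only [lineWeight, lineRate, Nat.add_sub_cancel]
  push_cast
  ring

theorem hasDerivAt_lineRate (j : ι) :
    HasDerivAt (lineRate c m z · j)
      (m * ((z j - c) ^ 2 * linePath c z t j ^ (m - 1))) t := by
  refine (((hasDerivAt_linePath (c := c) (z := z) j).fun_pow m).const_mul (z j - c)).congr_deriv ?_
  ring

theorem hasDerivAt_lineGap [Fintype ι] (k : ι) :
    HasDerivAt (lineGap β c m z k)
      (∑ j, lineWeight β c m z t j *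
        (β * (m + 1) * lineRate c m z t j * (lineRate c m z t k - lineRate c m z t j) +
          m * ((z k - c) ^ 2 * linePath c z t k ^ (m - 1) -
            (z j - c) ^ 2 * linePath c z t j ^ (m - 1)))) t := by
  have h := HasDerivAt.fun_sum (u := Finset.univ) (x := t)
    (A := fun j s => lineWeight β c m z s j * (lineRate c m z s k - lineRate c m z s j))
    fun j _ => (hasDerivAt_lineWeight j).fun_mul
      ((hasDerivAt_lineRate k).fun_sub (hasDerivAt_lineRate j))
  exact h.congr_deriv (Finset.sum_congr rfl fun j _ => by ring)

theorem sum_lineWeight_pos [Fintype ι] [Nonempty ι] : 0 < ∑ j, lineWeight β c m z t j :=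
  Finset.sum_pos (fun _ _ => exp_pos _) Finset.univ_nonempty

theorem hasDerivAt_lineWeight_div_sum [Fintype ι] (k : ι) :
    HasDerivAt (fun t => lineWeight β c m z t k / ∑ j, lineWeight β c m z t j)
      (β * (m + 1) * lineWeight β c m z t k / (∑ j, lineWeight β c m z t j) ^ 2 *
        lineGap β c m z k t) t := by
  have : Nonempty ι := ⟨k⟩
  refine ((hasDerivAt_lineWeight k).fun_div (HasDerivAt.fun_sum fun j _ => hasDerivAt_lineWeight j)
    sum_lineWeight_pos.ne').congr_deriv ?_
  have hnum : lineWeight β c m z t k * (β * (m + 1) * lineRate c m z t k) *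
        ∑ j, lineWeight β c m z t j -
      lineWeight β c m z t k * ∑ j, lineWeight β c m z t j * (β * (m + 1) * lineRate c m z t j) =
      β * (m + 1) * lineWeight β c m z t k * lineGap β c m z k t := by
    simp only [lineGap, Finset.mul_sum, ← Finset.sum_sub_distrib]
    exact Finset.sum_congr rfl fun j _ => by ring
  rw [div_mul_eq_mul_div, ← hnum]

theorem lineGap_nonpos [Fintype ι] (hc : 0 ≤ c) (hβ : 0 ≤ β) (hz : ∀ j, 0 ≤ z j)
    (hsum : ∑ j, (z j - c) = 0) {k : ι} (hk : z k ≤ c) (ht : t ∈ Icc 0 1) :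
    lineGap β c m z k t ≤ 0 := by
  set h : ℝ → ℝ := fun a => exp (β * a ^ (m + 1)) * a ^ m
  have hsplit : lineGap β c m z k t = lineRate c m z t k * ∑ j, lineWeight β c m z t j -
      ∑ j, (z j - c) * h (c + t * (z j - c)) := by
    rw [lineGap, Finset.mul_sum, ← Finset.sum_sub_distrib]
    exact Finset.sum_congr rfl fun j _ => by
      rw [← linePath_eq]; simp only [h, lineWeight, lineRate]; ring
  have hmono : MonotoneOn h (Ici 0) := fun a (ha : 0 ≤ a) b _ hab => by
    simp only [h]
    gcongr
  have hcheb := sum_mul_nonneg_of_monotoneOn hsum hmono ht.1 hc fun j _ => by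
    rw [mem_Ici, ← linePath_eq]; exact linePath_nonneg hc hz ht j
  have hXk : lineRate c m z t k ≤ 0 :=
    mul_nonpos_of_nonpos_of_nonneg (sub_nonpos.2 hk) (pow_nonneg (linePath_nonneg hc hz ht k) m)
  have hS : 0 ≤ ∑ j, lineWeight β c m z t j := Finset.sum_nonneg fun j _ => (exp_pos _).le
  rw [hsplit]
  linarith [mul_nonpos_of_nonpos_of_nonneg hXk hS]

theorem sum_lineWeight_mul_sub_sq_nonpos [Fintype ι] {n : ℕ} (hc : 0 < c) (hz : ∀ j, 0 ≤ z j)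
    {k : ι} (hk : c < z k) (ht : t ∈ Ioo 0 1) (h0 : lineGap β c (n + 1) z k t = 0) :
    ∑ j, lineWeight β c (n + 1) z t j *
      ((z k - c) ^ 2 * linePath c z t k ^ n - (z j - c) ^ 2 * linePath c z t j ^ n) ≤ 0 := by
  set F := lineWeight β c (n + 1) z t
  set e := t * (z k - c)
  have he : 0 < e := mul_pos ht.1 (sub_pos.2 hk)
  have hsub : ∀ j, linePath c z t j - c = t * (z j - c) := fun j => by rw [linePath_eq]; ring
  have hbalance : ∑ j, F j * lineRate c (n + 1) z t j =
      (∑ j, F j) * lineRate c (n + 1) z t k := by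
    simp only [lineGap, mul_sub, Finset.sum_sub_distrib, ← Finset.sum_mul] at h0
    linarith
  have hcon : ∑ j, F j * ((linePath c z t j - c) * linePath c z t j ^ (n + 1)) =
      (∑ j, F j) * (e * (c + e) ^ (n + 1)) := by
    rw [← linePath_eq]
    calc ∑ j, F j * ((linePath c z t j - c) * linePath c z t j ^ (n + 1))
        = t * ∑ j, F j * lineRate c (n + 1) z t j := by
          rw [Finset.mul_sum]
          exact Finset.sum_congr rfl fun j _ => by rw [hsub, lineRate]; ring
      _ = (∑ j, F j) * (e * linePath c z t k ^ (n + 1)) := by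
          rw [hbalance, lineRate]; ring
  have key := sum_mul_sq_mul_pow_ge n (fun j _ => (exp_pos _).le)
    (fun j _ => (linePath_pos hc hz ht j).le) hc he hcon
  rw [← linePath_eq] at key
  have hscaled : t ^ 2 * ∑ j, F j *
      ((z k - c) ^ 2 * linePath c z t k ^ n - (z j - c) ^ 2 * linePath c z t j ^ n) =
      (∑ j, F j) * (e ^ 2 * linePath c z t k ^ n) -
        ∑ j, F j * ((linePath c z t j - c) ^ 2 * linePath c z t j ^ n) := by
    rw [Finset.sum_mul, Finset.mul_sum, ← Finset.sum_sub_distrib]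
    exact Finset.sum_congr rfl fun j _ => by rw [hsub]; ring
  exact nonpos_of_mul_nonpos_right (hscaled ▸ sub_nonpos.2 key) (pow_pos ht.1 2)

theorem exists_hasDerivAt_lineGap_neg [Fintype ι] (hc : 0 < c) (hβ : 0 < β)
    (hz : ∀ j, 0 ≤ z j) (hsum : ∑ j, (z j - c) = 0) {k : ι} (hk : c < z k) (ht : t ∈ Ioo 0 1)
    (h0 : lineGap β c m z k t = 0) :
    ∃ g', HasDerivAt (lineGap β c m z k) g' t ∧ g' < 0 := by
  refine ⟨_, hasDerivAt_lineGap k, ?_⟩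
  set F := lineWeight β c m z t
  set X := lineRate c m z t
  set C := ∑ j, F j * ((z k - c) ^ 2 * linePath c z t k ^ (m - 1) -
    (z j - c) ^ 2 * linePath c z t j ^ (m - 1))
  have hsplit : ∑ j, F j * (β * (m + 1) * X j * (X k - X j) +
      m * ((z k - c) ^ 2 * linePath c z t k ^ (m - 1) -
        (z j - c) ^ 2 * linePath c z t j ^ (m - 1))) =
      β * (m + 1) * ∑ j, F j * X j * (X k - X j) + m * C := by
    rw [Finset.mul_sum, Finset.mul_sum, ← Finset.sum_add_distrib]
    exact Finset.sum_congr rfl fun j _ => by ring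
  have hvar : ∑ j, F j * X j * (X k - X j) = -∑ j, F j * (X k - X j) ^ 2 := by
    have : ∑ j, F j * X j * (X k - X j) + ∑ j, F j * (X k - X j) ^ 2 =
        X k * lineGap β c m z k t := by
      rw [← Finset.sum_add_distrib, lineGap, Finset.mul_sum]
      exact Finset.sum_congr rfl fun j _ => by ring
    rw [h0, mul_zero] at this
    linarith
  have hvar_pos : 0 < ∑ j, F j * (X k - X j) ^ 2 := by
    obtain ⟨j, -, hj⟩ := Finset.exists_le_of_sum_le ⟨k, Finset.mem_univ k⟩
      (f := fun j => z j - c) (g := 0) (by simp [hsum])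
    have hXj : X j ≤ 0 :=
      mul_nonpos_of_nonpos_of_nonneg hj (pow_nonneg (linePath_pos hc hz ht j).le m)
    have hXk : 0 < X k := mul_pos (sub_pos.2 hk) (pow_pos (linePath_pos hc hz ht k) m)
    exact Finset.sum_pos' (fun i _ => mul_nonneg (exp_pos _).le (sq_nonneg _))
      ⟨j, Finset.mem_univ j, mul_pos (exp_pos _) (by nlinarith)⟩
  have hC : (m : ℝ) * C ≤ 0 := by
    rcases m with _ | n
    · simp
    · exact mul_nonpos_of_nonneg_of_nonpos (Nat.cast_nonneg _)
        (sum_lineWeight_mul_sub_sq_nonpos hc hz hk ht h0)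
  rw [hsplit, hvar]
  nlinarith [mul_pos (mul_pos hβ (Nat.cast_add_one_pos m)) hvar_pos]

end LinePath

theorem gcwp_coordinate_monotonicity_along_line_general
    (q r : ℕ) (hq : 2 ≤ q) (hr : 2 ≤ r) (β : ℝ) (hβ : 0 < β)
    (z : Fin q → ℝ) (hz : (∀ k, 0 ≤ z k) ∧ ∑ k, z k = 1) :
    let zp : ℝ → Fin q → ℝ := fun t k => (1 / q) * (1 - t) + z k * t
    let g : (Fin q → ℝ) → (Fin q → ℝ) := fun w k =>
      Real.exp (β * w k ^ (r - 1)) / ∑ j, Real.exp (β * w j ^ (r - 1))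
    ∀ k : Fin q,
      (z k ≤ 1 / q → AntitoneOn (fun t => g (zp t) k) (Set.Icc (0 : ℝ) 1)) ∧
      (1 / q < z k →
        ∀ t₁ ∈ Set.Ioo (0 : ℝ) 1, ∀ t₂ ∈ Set.Ioo (0 : ℝ) 1,
          deriv (fun t => g (zp t) k) t₁ = 0 →
            deriv (fun t => g (zp t) k) t₂ = 0 → t₁ = t₂) := by
  intro zp g k
  obtain ⟨m, rfl⟩ : ∃ m, r = m + 2 := ⟨r - 2, by omega⟩
  have : NeZero q := ⟨by omega⟩
  have hc : (0 : ℝ) < 1 / q := by positivity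
  have hsum : ∑ j, (z j - 1 / q) = 0 := by simp [Finset.sum_sub_distrib, hz.2]
  have hg : (fun t => g (zp t) k) =
      fun t => lineWeight β (1 / q) m z t k / ∑ j, lineWeight β (1 / q) m z t j := rfl
  have hderiv := fun t =>
    hasDerivAt_lineWeight_div_sum (β := β) (c := 1 / q) (m := m) (z := z) (t := t) k
  have hfactor : ∀ t, 0 < β * (m + 1) * lineWeight β (1 / q) m z t k /
      (∑ j, lineWeight β (1 / q) m z t j) ^ 2 := fun t =>
    div_pos (mul_pos (by positivity) (exp_pos _)) (pow_pos sum_lineWeight_pos 2)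
  rw [hg]
  refine ⟨fun hk => ?_, fun hk t₁ ht₁ t₂ ht₂ h₁ h₂ => ?_⟩
  · refine antitoneOn_of_hasDerivWithinAt_nonpos (convex_Icc 0 1)
      (fun t _ => (hderiv t).continuousAt.continuousWithinAt)
      (fun t _ => (hderiv t).hasDerivWithinAt)
      fun t ht => mul_nonpos_of_nonneg_of_nonpos (hfactor t).le ?_
    rw [interior_Icc] at ht
    exact lineGap_nonpos hc.le hβ.le hz.1 hsum hk (Ioo_subset_Icc_self ht)
  · have hgap : ∀ t, deriv (fun t => lineWeight β (1 / q) m z t k /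
        ∑ j, lineWeight β (1 / q) m z t j) t = 0 → lineGap β (1 / q) m z k t = 0 := fun t h =>
      (mul_eq_zero.1 ((hderiv t).deriv ▸ h)).resolve_left (hfactor t).ne'
    exact eq_of_eq_zero_of_hasDerivAt_neg ordConnected_Ioo
      (fun t _ => (hasDerivAt_lineGap k).continuousAt.continuousWithinAt)
      (fun t ht h0 => exists_hasDerivAt_lineGap_neg hc hβ hz.1 hsum hk ht h0)
      ht₁ ht₂ (hgap t₁ h₁) (hgap t₂ h₂)

/-- Along the straight-line path `z(t) = (1/q)(1−t) + zt` with `z` in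
the simplex: (a) if `z_k ≤ 1/q` then `t ↦ g_k^r(z(t))` is monotonically decreasing
on [0,1]; (b) if `z_k > 1/q` then `t ↦ g_k^r(z(t))` has at most one critical point
in (0,1). -/
theorem gcwp_coordinate_monotonicity_along_line
    (q r : ℕ) (hq : 2 ≤ q) (hr : 2 ≤ r) (β : ℝ) (hβ : 0 < β)
    (z : Fin q → ℝ) (hz : (∀ k, 0 ≤ z k) ∧ ∑ k, z k = 1)
    (hzne : z ≠ fun _ => 1 / (q : ℝ)) :
    let zp : ℝ → Fin q → ℝ := fun t k => (1 / q) * (1 - t) + z k * t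
    let g : (Fin q → ℝ) → (Fin q → ℝ) := fun w k =>
      Real.exp (β * w k ^ (r - 1)) / ∑ j, Real.exp (β * w j ^ (r - 1))
    ∀ k : Fin q,
      (z k ≤ 1 / q → AntitoneOn (fun t => g (zp t) k) (Set.Icc (0 : ℝ) 1)) ∧
      (1 / q < z k →
        ∀ t₁ ∈ Set.Ioo (0 : ℝ) 1, ∀ t₂ ∈ Set.Ioo (0 : ℝ) 1,
          deriv (fun t => g (zp t) k) t₁ = 0 →
            deriv (fun t => g (zp t) k) t₂ = 0 → t₁ = t₂) :=
  gcwp_coordinate_monotonicity_along_line_general q r hq hr β hβ z hz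
end

section
/- Suppose a coupling (Xᵗ,Yᵗ) of a Markov chain on Λⁿ satisfies E_{σ,τ}[d(X¹,Y¹)] ≤ e^{−α/n} d(σ,τ) for all pairs (σ,τ) with σ in a set A, where the chain started in stationarity remains in A in one step except with probability p_n. Then for all t, ‖Pᵗ(y,·) − π‖_TV ≤ n e^{−αt/n} + n t p_n, where π is the stationary distribution, d is the Hamming distance (so d ≤ n), and p_n = π{σ : σ ∉ A}. In particular, if p_n ≤ e^{−cn} for some c > 0, then taking t = (n/α)(log n + log(2/ε)) gives ‖Pᵗ(y,·) − π‖_TV ≤ ε for all n sufficiently large, so t_mix(ε) = O(n log n). -/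
set_option maxHeartbeats 1000000


open Finset

/-- Suppose a coupling `(Xᵗ,Yᵗ)` of a Markov chain on `Λⁿ`
(given by a coupling kernel `Cpl` of the transition kernel `K`, with stationary
distribution `π`) contracts the mean Hamming distance by a factor `e^{−α/n}`
whenever the first coordinate starts in a set `A`, and let
`p_n = π(Aᶜ)`. Starting the coupled chain `μ` with `X⁰ ∼ π` and `Y⁰ = y`, one has
for all `t`: `‖Pᵗ(y,·) − π‖_TV ≤ n e^{−αt/n} + n t p_n`.  If moreover
`p_n ≤ e^{−cn}` for some `c > 0`, then for every `ε > 0`, taking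
`t = ⌈(n/α)(log n + log(2/ε))⌉` gives `‖Pᵗ(y,·) − π‖_TV ≤ ε` for all `n`
sufficiently large; in particular `t_mix(ε) = O(n log n)`. -/
theorem aggregate_path_coupling_rapid_mixing
    (q : ℕ) (hq : 2 ≤ q) (α c : ℝ) (hα : 0 < α) (hc : 0 < c)
    (K : (n : ℕ) → (Fin n → Fin q) → (Fin n → Fin q) → ℝ)
    (π : (n : ℕ) → (Fin n → Fin q) → ℝ)
    (A : (n : ℕ) → Finset (Fin n → Fin q))
    (Cpl : (n : ℕ) → (Fin n → Fin q) → (Fin n → Fin q) →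
      ((Fin n → Fin q) × (Fin n → Fin q)) → ℝ)
    -- `μ n y t` is the joint law of `(Xᵗ, Yᵗ)` for the coupled chain started with
    -- `X⁰ ∼ π` (stationarity) and `Y⁰ = y`
    (μ : (n : ℕ) → (Fin n → Fin q) → ℕ →
      ((Fin n → Fin q) × (Fin n → Fin q)) → ℝ)
    -- K is a stochastic kernel with stationary distribution π
    (hK0 : ∀ n s s', 0 ≤ K n s s') (hK1 : ∀ n s, ∑ s', K n s s' = 1)
    (hπ0 : ∀ n s, 0 ≤ π n s) (hπ1 : ∀ n, ∑ s, π n s = 1)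
    (hπstat : ∀ n s, ∑ s', π n s' * K n s' s = π n s)
    -- Cpl is a coupling kernel for two copies of the chain
    (hC0 : ∀ n σ τ p, 0 ≤ Cpl n σ τ p)
    (hCm1 : ∀ n σ τ a, ∑ b, Cpl n σ τ (a, b) = K n σ a)
    (hCm2 : ∀ n σ τ b, ∑ a, Cpl n σ τ (a, b) = K n τ b)
    -- the coupled process: X⁰ ∼ π, Y⁰ = y, evolving by the coupling kernel
    (hμ0 : ∀ n y p, μ n y 0 p = if p.2 = y then π n p.1 else 0)
    (hμstep : ∀ n y t p,
      μ n y (t + 1) p = ∑ p', μ n y t p' * Cpl n p'.1 p'.2 p)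
    -- contraction of the mean coupling (Hamming) distance when starting in A
    (hcontract : ∀ n, 1 ≤ n → ∀ σ ∈ A n, ∀ τ,
      ∑ p : (Fin n → Fin q) × (Fin n → Fin q),
          Cpl n σ τ p * ((univ.filter fun j => p.1 j ≠ p.2 j).card : ℝ)
        ≤ Real.exp (-α / n) * ((univ.filter fun j => σ j ≠ τ j).card : ℝ)) :
    -- first conclusion: the TV bound `n e^{−αt/n} + n t p_n` for every t
    (∀ n, 1 ≤ n → ∀ y : Fin n → Fin q, ∀ t : ℕ,
      (1 / 2) * ∑ b, |(∑ a, μ n y t (a, b)) - π n b|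
        ≤ (n : ℝ) * Real.exp (-α * t / n)
          + (n : ℝ) * t * ∑ σ ∈ (A n)ᶜ, π n σ) ∧
    -- second conclusion: rapid mixing in time `(n/α)(log n + log(2/ε))`
    ((∀ n, 1 ≤ n → ∑ σ ∈ (A n)ᶜ, π n σ ≤ Real.exp (-c * n)) →
      ∀ ε : ℝ, 0 < ε → ∃ N : ℕ, ∀ n, N ≤ n → ∀ y : Fin n → Fin q,
        (1 / 2) * ∑ b,
            |(∑ a, μ n y
                (⌈((n : ℝ) / α) * (Real.log n + Real.log (2 / ε))⌉₊) (a, b))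
              - π n b|
          ≤ ε) := by
  classical
  -- nonnegativity of μ
  have hμpos : ∀ n y t p, 0 ≤ μ n y t p := by
    intro n y t
    induction t with
    | zero =>
      intro p
      rw [hμ0]
      split
      · exact hπ0 n p.1
      · exact le_rfl
    | succ t ih =>
      intro p
      rw [hμstep]
      exact Finset.sum_nonneg fun p' _ => mul_nonneg (ih p') (hC0 n p'.1 p'.2 p)
  -- first marginal is π for all times
  have hmarg : ∀ n y t a, (∑ b, μ n y t (a, b)) = π n a := by
    intro n y t
    induction t with
    | zero =>
      intro a
      simp only [hμ0]
      simp
    | succ t ih =>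
      intro a
      calc (∑ b, μ n y (t + 1) (a, b))
          = ∑ b, ∑ p', μ n y t p' * Cpl n p'.1 p'.2 (a, b) := by
            simp only [hμstep]
        _ = ∑ p', ∑ b, μ n y t p' * Cpl n p'.1 p'.2 (a, b) := Finset.sum_comm
        _ = ∑ p', μ n y t p' * K n p'.1 a := by
            refine Finset.sum_congr rfl fun p' _ => ?_
            rw [← Finset.mul_sum, hCm1]
        _ = ∑ a', ∑ b', μ n y t (a', b') * K n a' a := by
            rw [Fintype.sum_prod_type]
        _ = ∑ a', π n a' * K n a' a := by
            refine Finset.sum_congr rfl fun a' _ => ?_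
            rw [← Finset.sum_mul, ih]
        _ = π n a := hπstat n a
  -- total mass 1
  have htot : ∀ n y t, (∑ p, μ n y t p) = 1 := by
    intro n y t
    rw [Fintype.sum_prod_type]
    simp only [hmarg]
    exact hπ1 n
  -- Hamming distance is at most n
  have hdle : ∀ n (p : (Fin n → Fin q) × (Fin n → Fin q)),
      ((univ.filter fun j => p.1 j ≠ p.2 j).card : ℝ) ≤ n := by
    intro n p
    have := Finset.card_filter_le (univ : Finset (Fin n)) (fun j => p.1 j ≠ p.2 j)
    have h2 : ((univ.filter fun j => p.1 j ≠ p.2 j).card : ℕ) ≤ n := by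
      simpa using this
    exact_mod_cast h2
  have hd0 : ∀ n (p : (Fin n → Fin q) × (Fin n → Fin q)),
      (0:ℝ) ≤ ((univ.filter fun j => p.1 j ≠ p.2 j).card : ℝ) := by
    intro n p; positivity
  -- coupling kernel is a probability measure
  have hCtot : ∀ n (σ τ : Fin n → Fin q), (∑ p, Cpl n σ τ p) = 1 := by
    intro n σ τ
    rw [Fintype.sum_prod_type]
    simp only [hCm1]
    exact hK1 n σ
  -- probability that the first coordinate lies outside A equals π(Aᶜ)
  have hout : ∀ n y t,
      (∑ p ∈ univ.filter (fun p : (Fin n → Fin q) × (Fin n → Fin q) => p.1 ∉ A n), μ n y t p)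
        = ∑ σ ∈ (A n)ᶜ, π n σ := by
    intro n y t
    rw [Finset.sum_filter, Fintype.sum_prod_type]
    have : ∀ a : Fin n → Fin q,
        (∑ b, if a ∉ A n then μ n y t (a, b) else 0)
          = if a ∉ A n then π n a else 0 := by
      intro a
      split
      · exact hmarg n y t a
      · simp
    rw [Finset.sum_congr rfl fun a _ => this a]
    rw [← Finset.sum_filter]
    congr 1
    ext a
    simp
  -- part 1
  have part1 : ∀ n, 1 ≤ n → ∀ y : Fin n → Fin q, ∀ t : ℕ,
      (1 / 2) * ∑ b, |(∑ a, μ n y t (a, b)) - π n b|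
        ≤ (n : ℝ) * Real.exp (-α * t / n)
          + (n : ℝ) * t * ∑ σ ∈ (A n)ᶜ, π n σ := by
    intro n hn y t
    set pn : ℝ := ∑ σ ∈ (A n)ᶜ, π n σ with hpn
    have hpn0 : 0 ≤ pn := Finset.sum_nonneg fun σ _ => hπ0 n σ
    set d : (Fin n → Fin q) × (Fin n → Fin q) → ℝ :=
      fun p => ((univ.filter fun j => p.1 j ≠ p.2 j).card : ℝ) with hd
    set D : ℕ → ℝ := fun s => ∑ p, μ n y s p * d p with hD
    have hnpos : (0:ℝ) < n := by exact_mod_cast hn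
    -- D 0 ≤ n
    have hD0 : D 0 ≤ n := by
      have : D 0 ≤ ∑ p, μ n y 0 p * n := by
        refine Finset.sum_le_sum fun p _ => ?_
        exact mul_le_mul_of_nonneg_left (hdle n p) (hμpos n y 0 p)
      calc D 0 ≤ ∑ p, μ n y 0 p * n := this
        _ = (∑ p, μ n y 0 p) * n := by rw [Finset.sum_mul]
        _ = n := by rw [htot n y 0, one_mul]
    -- the one-step contraction for D
    have hDrec : ∀ s, D (s + 1) ≤ Real.exp (-α / n) * D s + n * pn := by
      intro s
      have hswap : D (s + 1)
          = ∑ p', μ n y s p' * ∑ p, Cpl n p'.1 p'.2 p * d p := by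
        calc D (s + 1) = ∑ p, (∑ p', μ n y s p' * Cpl n p'.1 p'.2 p) * d p := by
              simp only [hD, hμstep]
          _ = ∑ p, ∑ p', μ n y s p' * (Cpl n p'.1 p'.2 p * d p) := by
              simp only [Finset.sum_mul, mul_assoc]
          _ = ∑ p', ∑ p, μ n y s p' * (Cpl n p'.1 p'.2 p * d p) := Finset.sum_comm
          _ = ∑ p', μ n y s p' * ∑ p, Cpl n p'.1 p'.2 p * d p := by
              simp only [Finset.mul_sum]
      rw [hswap,
        ← Finset.sum_filter_add_sum_filter_not univ
          (fun p' : (Fin n → Fin q) × (Fin n → Fin q) => p'.1 ∈ A n)]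
      have hA : (∑ p' ∈ univ.filter (fun p' : (Fin n → Fin q) × (Fin n → Fin q) => p'.1 ∈ A n),
            μ n y s p' * ∑ p, Cpl n p'.1 p'.2 p * d p)
          ≤ Real.exp (-α / n) * D s := by
        have step1 : (∑ p' ∈ univ.filter (fun p' : (Fin n → Fin q) × (Fin n → Fin q) => p'.1 ∈ A n),
              μ n y s p' * ∑ p, Cpl n p'.1 p'.2 p * d p)
            ≤ ∑ p' ∈ univ.filter (fun p' : (Fin n → Fin q) × (Fin n → Fin q) => p'.1 ∈ A n),
              μ n y s p' * (Real.exp (-α / n) * d p') := by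
          refine Finset.sum_le_sum fun p' hp' => ?_
          have hmem : p'.1 ∈ A n := (Finset.mem_filter.mp hp').2
          exact mul_le_mul_of_nonneg_left
            (hcontract n hn p'.1 hmem p'.2) (hμpos n y s p')
        have step2 : (∑ p' ∈ univ.filter (fun p' : (Fin n → Fin q) × (Fin n → Fin q) => p'.1 ∈ A n),
              μ n y s p' * (Real.exp (-α / n) * d p'))
            ≤ ∑ p', μ n y s p' * (Real.exp (-α / n) * d p') := by
          refine Finset.sum_le_sum_of_subset_of_nonneg (Finset.filter_subset _ _)
            fun p' _ _ => ?_
          exact mul_nonneg (hμpos n y s p')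
            (mul_nonneg (Real.exp_nonneg _) (hd0 n p'))
        have step3 : (∑ p', μ n y s p' * (Real.exp (-α / n) * d p'))
            = Real.exp (-α / n) * D s := by
          rw [hD, Finset.mul_sum]
          refine Finset.sum_congr rfl fun p' _ => ?_
          ring
        linarith
      have hB : (∑ p' ∈ univ.filter (fun p' : (Fin n → Fin q) × (Fin n → Fin q) => ¬ p'.1 ∈ A n),
            μ n y s p' * ∑ p, Cpl n p'.1 p'.2 p * d p)
          ≤ n * pn := by
        have step1 : (∑ p' ∈ univ.filter (fun p' : (Fin n → Fin q) × (Fin n → Fin q) => ¬ p'.1 ∈ A n),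
              μ n y s p' * ∑ p, Cpl n p'.1 p'.2 p * d p)
            ≤ ∑ p' ∈ univ.filter (fun p' : (Fin n → Fin q) × (Fin n → Fin q) => ¬ p'.1 ∈ A n),
              μ n y s p' * n := by
          refine Finset.sum_le_sum fun p' _ => ?_
          refine mul_le_mul_of_nonneg_left ?_ (hμpos n y s p')
          calc (∑ p, Cpl n p'.1 p'.2 p * d p)
              ≤ ∑ p, Cpl n p'.1 p'.2 p * n := by
                refine Finset.sum_le_sum fun p _ => ?_
                exact mul_le_mul_of_nonneg_left (hdle n p) (hC0 n p'.1 p'.2 p)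
            _ = (∑ p, Cpl n p'.1 p'.2 p) * n := by rw [Finset.sum_mul]
            _ = n := by rw [hCtot, one_mul]
        have step2 : (∑ p' ∈ univ.filter (fun p' : (Fin n → Fin q) × (Fin n → Fin q) => ¬ p'.1 ∈ A n),
              μ n y s p' * (n:ℝ)) = pn * n := by
          rw [← Finset.sum_mul]
          congr 1
          exact hout n y s
        rw [step2, mul_comm] at step1
        exact step1
      linarith
    -- iterate the contraction
    have hDbound : ∀ s : ℕ, D s ≤ n * Real.exp (-α * s / n) + n * s * pn := by
      intro s
      induction s with
      | zero =>
        have h0 : (-α * ((0:ℕ):ℝ) / (n:ℝ)) = 0 := by norm_num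
        rw [h0, Real.exp_zero]
        simpa using hD0
      | succ s ih =>
        have he1 : Real.exp (-α / n) ≤ 1 := by
          rw [Real.exp_le_one_iff]
          exact div_nonpos_of_nonpos_of_nonneg (by linarith) (le_of_lt hnpos)
        have he0 : (0:ℝ) ≤ Real.exp (-α / n) := Real.exp_nonneg _
        have hexp : Real.exp (-α / n) * Real.exp (-α * s / n)
            = Real.exp (-α * (s + 1) / n) := by
          rw [← Real.exp_add]
          congr 1
          field_simp
          ring
        have h1 : D (s + 1) ≤ Real.exp (-α / n) * D s + n * pn := hDrec s
        have h2 : Real.exp (-α / n) * D s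
            ≤ Real.exp (-α / n) * (n * Real.exp (-α * s / n) + n * s * pn) :=
          mul_le_mul_of_nonneg_left ih he0
        have h3 : Real.exp (-α / n) * (n * Real.exp (-α * s / n) + n * s * pn)
            = n * (Real.exp (-α / n) * Real.exp (-α * s / n))
              + Real.exp (-α / n) * (n * s * pn) := by ring
        have h4 : Real.exp (-α / n) * ((n:ℝ) * s * pn) ≤ n * s * pn := by
          refine mul_le_of_le_one_left ?_ he1
          positivity
        have h5 : ((n:ℝ) * (s + 1)) * pn = n * s * pn + n * pn := by ring
        have hcast : ((s + 1 : ℕ) : ℝ) = (s : ℝ) + 1 := by push_cast; ring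
        rw [hcast]
        rw [hexp] at h3
        nlinarith [h1, h2, h3, h4]
    -- coupling inequality: TV distance is at most P(X ≠ Y) ≤ D t
    have hTV : (1 / 2) * (∑ b, |(∑ a, μ n y t (a, b)) - π n b|) ≤ D t := by
      have hνtot : (∑ b, ∑ a, μ n y t (a, b)) = 1 := by
        rw [← htot n y t, Fintype.sum_prod_type]
        exact Finset.sum_comm
      have hdiag_le1 : ∀ b, μ n y t (b, b) ≤ ∑ a, μ n y t (a, b) := fun b =>
        Finset.single_le_sum (fun a _ => hμpos n y t (a, b)) (Finset.mem_univ b)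
      have hdiag_le2 : ∀ b, μ n y t (b, b) ≤ π n b := by
        intro b
        rw [← hmarg n y t b]
        exact Finset.single_le_sum (fun b' _ => hμpos n y t (b, b')) (Finset.mem_univ b)
      have habs : ∀ b, |(∑ a, μ n y t (a, b)) - π n b|
          ≤ ((∑ a, μ n y t (a, b)) - μ n y t (b, b)) + (π n b - μ n y t (b, b)) := by
        intro b
        rw [abs_sub_le_iff]
        constructor <;> linarith [hdiag_le1 b, hdiag_le2 b]
      have hsum : (∑ b, |(∑ a, μ n y t (a, b)) - π n b|)
          ≤ 2 * (1 - ∑ b, μ n y t (b, b)) := by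
        calc (∑ b, |(∑ a, μ n y t (a, b)) - π n b|)
            ≤ ∑ b, (((∑ a, μ n y t (a, b)) - μ n y t (b, b))
                + (π n b - μ n y t (b, b))) :=
              Finset.sum_le_sum fun b _ => habs b
          _ = (∑ b, ∑ a, μ n y t (a, b)) + (∑ b, π n b)
              - 2 * ∑ b, μ n y t (b, b) := by
              rw [Finset.sum_add_distrib, Finset.sum_sub_distrib,
                Finset.sum_sub_distrib]
              ring
          _ = 2 * (1 - ∑ b, μ n y t (b, b)) := by
              rw [hνtot, hπ1 n]; ring
      have hdiageq : (∑ p ∈ univ.filter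
            (fun p : (Fin n → Fin q) × (Fin n → Fin q) => p.1 = p.2), μ n y t p)
          = ∑ b, μ n y t (b, b) := by
        rw [Finset.sum_filter, Fintype.sum_prod_type]
        refine Finset.sum_congr rfl fun a _ => ?_
        simp
      have hsplit : (∑ b, μ n y t (b, b))
          + (∑ p ∈ univ.filter
              (fun p : (Fin n → Fin q) × (Fin n → Fin q) => ¬ p.1 = p.2), μ n y t p)
          = 1 := by
        rw [← hdiageq,
          Finset.sum_filter_add_sum_filter_not univ
            (fun p : (Fin n → Fin q) × (Fin n → Fin q) => p.1 = p.2)]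
        exact htot n y t
      have hOffD : (∑ p ∈ univ.filter
            (fun p : (Fin n → Fin q) × (Fin n → Fin q) => ¬ p.1 = p.2), μ n y t p)
          ≤ D t := by
        have h1 : (∑ p ∈ univ.filter
              (fun p : (Fin n → Fin q) × (Fin n → Fin q) => ¬ p.1 = p.2), μ n y t p)
            ≤ ∑ p ∈ univ.filter
              (fun p : (Fin n → Fin q) × (Fin n → Fin q) => ¬ p.1 = p.2),
                μ n y t p * d p := by
          refine Finset.sum_le_sum fun p hp => ?_
          have hne : p.1 ≠ p.2 := (Finset.mem_filter.mp hp).2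
          have hone : (1:ℝ) ≤ d p := by
            simp only [hd]
            have hcard : 0 < (univ.filter fun j => p.1 j ≠ p.2 j).card := by
              rw [Finset.card_pos]
              obtain ⟨j, hj⟩ := Function.ne_iff.mp hne
              exact ⟨j, by simp [hj]⟩
            exact_mod_cast hcard
          exact le_mul_of_one_le_right (hμpos n y t p) hone
        have h2 : (∑ p ∈ univ.filter
              (fun p : (Fin n → Fin q) × (Fin n → Fin q) => ¬ p.1 = p.2),
                μ n y t p * d p) ≤ D t :=
          Finset.sum_le_sum_of_subset_of_nonneg (Finset.filter_subset _ _)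
            fun p _ _ => mul_nonneg (hμpos n y t p) (hd0 n p)
        linarith
      linarith
    calc (1 / 2) * (∑ b, |(∑ a, μ n y t (a, b)) - π n b|) ≤ D t := hTV
      _ ≤ n * Real.exp (-α * t / n) + n * t * pn := hDbound t
  refine ⟨part1, ?_⟩
  intro hp ε hε
  set L : ℝ := max 0 (Real.log (2 / ε)) with hL
  have hL0 : 0 ≤ L := le_max_left _ _
  set C : ℝ := (1 + L) / α + 1 with hCdef
  have hCpos : 0 < C := by positivity
  -- the dominating sequence tends to zero
  have htend : Filter.Tendsto (fun n : ℕ => C * (n:ℝ)^3 * Real.exp (-c * n))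
      Filter.atTop (nhds 0) := by
    have h1 : Filter.Tendsto (fun x : ℝ => x ^ 3 * Real.exp (-x))
        Filter.atTop (nhds 0) := Real.tendsto_pow_mul_exp_neg_atTop_nhds_zero 3
    have h2 : Filter.Tendsto (fun n : ℕ => c * (n:ℝ)) Filter.atTop Filter.atTop :=
      Filter.Tendsto.const_mul_atTop hc tendsto_natCast_atTop_atTop
    have h3 := h1.comp h2
    have h4 := Filter.Tendsto.const_mul (C / c^3) h3
    rw [mul_zero] at h4
    refine h4.congr fun n => ?_
    simp only [Function.comp]
    have hne : -(c * (n:ℝ)) = -c * n := by ring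
    rw [hne]
    field_simp
  have hev1 : ∀ᶠ n : ℕ in Filter.atTop, 1 ≤ n := Filter.eventually_ge_atTop 1
  have hev2 : ∀ᶠ n : ℕ in Filter.atTop, (max 1 (ε/2) : ℝ) ≤ (n:ℝ) :=
    tendsto_natCast_atTop_atTop.eventually_ge_atTop _
  have hev3 : ∀ᶠ n : ℕ in Filter.atTop,
      C * (n:ℝ)^3 * Real.exp (-c * n) < ε / 2 :=
    htend.eventually_lt_const (by linarith)
  obtain ⟨N, hN⟩ := Filter.eventually_atTop.mp ((hev1.and hev2).and hev3)
  refine ⟨N, fun n hn y => ?_⟩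
  obtain ⟨⟨hn1, hn2⟩, hn3⟩ := hN n hn
  set t : ℕ := ⌈((n:ℝ) / α) * (Real.log n + Real.log (2 / ε))⌉₊ with ht
  have hbound := part1 n hn1 y t
  have hnpos : (0:ℝ) < n := by exact_mod_cast hn1
  have hε2 : (0:ℝ) < ε / 2 := by linarith
  have hlogsum : 0 ≤ Real.log n + Real.log (2/ε) := by
    have h1 : Real.log (ε/2) ≤ Real.log n := by
      refine (Real.log_le_log_iff (by positivity) hnpos).mpr ?_
      calc (ε/2 : ℝ) ≤ max 1 (ε/2) := le_max_right _ _
        _ ≤ n := hn2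
    have h2 : Real.log (2/ε) = - Real.log (ε/2) := by
      rw [← Real.log_inv]
      congr 1
      rw [inv_div]
    linarith
  have hx0 : 0 ≤ ((n:ℝ)/α) * (Real.log n + Real.log (2/ε)) :=
    mul_nonneg (by positivity) hlogsum
  -- term A: n e^{-αt/n} ≤ ε/2
  have hexpA : (n:ℝ) * Real.exp (-α * t / n) ≤ ε/2 := by
    have h1 : (Real.log n + Real.log (2/ε)) ≤ α * t / n := by
      rw [le_div_iff₀ hnpos]
      have h2 := mul_le_mul_of_nonneg_left
        (Nat.le_ceil (((n:ℝ)/α) * (Real.log n + Real.log (2/ε)))) hα.le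
      calc (Real.log n + Real.log (2/ε)) * n
          = α * (((n:ℝ)/α) * (Real.log n + Real.log (2/ε))) := by
            field_simp
        _ ≤ α * t := h2
    have h2 : Real.exp (-α * t / n)
        ≤ Real.exp (-(Real.log n + Real.log (2/ε))) := by
      apply Real.exp_le_exp.mpr
      rw [neg_mul, neg_div]
      linarith
    have h3 : Real.exp (-(Real.log n + Real.log (2/ε))) = (1/(n:ℝ)) * (ε/2) := by
      rw [neg_add, Real.exp_add, Real.exp_neg, Real.exp_neg,
        Real.exp_log hnpos, Real.exp_log (by positivity : (0:ℝ) < 2/ε),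
        inv_div, one_div]
    have h4 : (n:ℝ) * Real.exp (-α * t / n) ≤ (n:ℝ) * ((1/(n:ℝ)) * (ε/2)) := by
      rw [← h3]
      exact mul_le_mul_of_nonneg_left h2 hnpos.le
    have h5 : (n:ℝ) * ((1/(n:ℝ)) * (ε/2)) = ε/2 := by
      field_simp
    linarith
  -- term B: n t p_n ≤ ε/2
  have hlogn : Real.log n ≤ n := by
    have := Real.log_le_sub_one_of_pos hnpos
    linarith
  have htle : (t:ℝ) ≤ ((n:ℝ)/α) * ((n:ℝ) + L) + 1 := by
    have hceil : (t:ℝ) < ((n:ℝ)/α) * (Real.log n + Real.log (2/ε)) + 1 := by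
      rw [ht]
      exact Nat.ceil_lt_add_one hx0
    have hmono : ((n:ℝ)/α) * (Real.log n + Real.log (2/ε))
        ≤ ((n:ℝ)/α) * ((n:ℝ) + L) := by
      refine mul_le_mul_of_nonneg_left ?_ (by positivity)
      have : Real.log (2/ε) ≤ L := le_max_right _ _
      linarith
    linarith
  have hα' : α ≠ 0 := ne_of_gt hα
  have hn0 : (n:ℝ) ≠ 0 := ne_of_gt hnpos
  have hnt : (n:ℝ) * t ≤ C * (n:ℝ)^3 := by
    have h1 : (1:ℝ) ≤ n := by exact_mod_cast hn1
    have hstep : (n:ℝ) * t ≤ (n:ℝ) * (((n:ℝ)/α) * ((n:ℝ) + L) + 1) := by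
      have := mul_le_mul_of_nonneg_left htle hnpos.le
      exact this
    have hn2' : (n:ℝ)^2 ≤ (n:ℝ)^3 := pow_le_pow_right₀ h1 (by norm_num)
    have hn1' : (n:ℝ) ≤ (n:ℝ)^3 := by
      calc (n:ℝ) = (n:ℝ)^1 := (pow_one _).symm
        _ ≤ (n:ℝ)^3 := pow_le_pow_right₀ h1 (by norm_num)
    have e1 : (n:ℝ) * (((n:ℝ)/α) * ((n:ℝ) + L) + 1)
        = ((n:ℝ)^3 + L*(n:ℝ)^2)/α + n := by field_simp
    have e2 : C * (n:ℝ)^3 = ((n:ℝ)^3 + L*(n:ℝ)^3)/α + (n:ℝ)^3 := by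
      rw [hCdef]; field_simp
    have hdiv : ((n:ℝ)^3 + L*(n:ℝ)^2)/α ≤ ((n:ℝ)^3 + L*(n:ℝ)^3)/α := by
      gcongr
    calc (n:ℝ) * t ≤ (n:ℝ) * (((n:ℝ)/α) * ((n:ℝ) + L) + 1) := hstep
      _ = ((n:ℝ)^3 + L*(n:ℝ)^2)/α + n := e1
      _ ≤ ((n:ℝ)^3 + L*(n:ℝ)^3)/α + (n:ℝ)^3 := add_le_add hdiv hn1'
      _ = C * (n:ℝ)^3 := e2.symm
  have hpn0' : (0:ℝ) ≤ ∑ σ ∈ (A n)ᶜ, π n σ :=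
    Finset.sum_nonneg fun σ _ => hπ0 n σ
  have htermB : (n:ℝ) * t * (∑ σ ∈ (A n)ᶜ, π n σ) ≤ ε/2 := by
    have hb1 : (n:ℝ) * t * (∑ σ ∈ (A n)ᶜ, π n σ)
        ≤ (n:ℝ) * t * Real.exp (-c * n) :=
      mul_le_mul_of_nonneg_left (hp n hn1) (by positivity)
    have hb2 : (n:ℝ) * t * Real.exp (-c * n) ≤ C * (n:ℝ)^3 * Real.exp (-c * n) :=
      mul_le_mul_of_nonneg_right hnt (Real.exp_nonneg _)
    exact le_trans hb1 (le_trans hb2 hn3.le)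
  linarith [hbound]
end
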